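/- arXiv:2207.11611 — 5 statements merged into one kernel-verified Lean document; each statement's English description precedes it below -/
import Mathlib

section
/- Let p > 0, t ≥ p+1 and h ∈ (1/t, 1). Then there exists N ∈ ℕ with N ≥ 2 such that p^h · ∑_{i=N+1}^∞ i^{-t h} < 1 and ∑_{i=2}^{N} ((i-1)^{-p} - i^{-p})^h ≥ 1. -/
/-!
The tails `∑_{i > N} i^{-th}` tend to `0`, so the first inequality holds for all large `N`.
For the second, the increments `dᵢ = (i-1)^{-p} - i^{-p}` lie in `[0, 1]` and telescope to
`1 - N^{-p}`; since `h < 1` we have `dᵢ ≤ dᵢ^h`, with strict gain `δ = d₂^h - d₂ > 0` in the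
first term. Hence `∑_{i=2}^N dᵢ^h ≥ 1 + δ - N^{-p} ≥ 1` once `N^{-p} ≤ δ`.
-/

open Filter Finset Topology

-- For `s ≥ -1` the series diverges and every `tsum` here is `0` by convention.
theorem tendsto_tsum_natCast_add_rpow (s : ℝ) :
    Tendsto (fun N : ℕ => ∑' i : ℕ, ((N : ℝ) + 1 + i) ^ s) atTop (𝓝 0) := by
  have hshift := (tendsto_sum_nat_add fun n : ℕ => (n : ℝ) ^ s).comp (tendsto_add_atTop_nat 1)
  refine hshift.congr fun N => tsum_congr fun i => ?_
  push_cast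
  ring_nf

theorem sum_Icc_sub_telescope (g : ℝ → ℝ) {m n : ℕ} (hmn : m ≤ n) :
    ∑ i ∈ Icc (m + 1) n, (g ((i : ℝ) - 1) - g i) = g m - g n := by
  induction n, hmn using Nat.le_induction with
  | base => simp
  | succ n hmn ih =>
    rw [sum_Icc_succ_top (by omega), ih]
    push_cast
    ring_nf

theorem sum_add_rpow_sub_self_le_sum_rpow {ι : Type*} {s : Finset ι} {d : ι → ℝ} {h : ℝ}
    (hd0 : ∀ i ∈ s, 0 ≤ d i) (hd1 : ∀ i ∈ s, d i ≤ 1) (hh : h ≤ 1) {j : ι} (hj : j ∈ s) :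
    ∑ i ∈ s, d i + (d j ^ h - d j) ≤ ∑ i ∈ s, d i ^ h := by
  classical
  rw [← add_sum_erase s _ hj, ← add_sum_erase s _ hj]
  have hrest : ∑ i ∈ s.erase j, d i ≤ ∑ i ∈ s.erase j, d i ^ h :=
    sum_le_sum fun i hi =>
      Real.self_le_rpow_of_le_one (hd0 i (mem_of_mem_erase hi)) (hd1 i (mem_of_mem_erase hi)) hh
  linarith

theorem rpow_neg_sub_succ_mem_Icc {p : ℝ} (hp : 0 ≤ p) {x : ℝ} (hx : 1 ≤ x) :
    x ^ (-p) - (x + 1) ^ (-p) ∈ Set.Icc 0 1 := by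
  have hmono : (x + 1) ^ (-p) ≤ x ^ (-p) :=
    Real.rpow_le_rpow_of_nonpos (by linarith) (by linarith) (by linarith)
  have hle_one : x ^ (-p) ≤ 1 := Real.rpow_le_one_of_one_le_of_nonpos hx (by linarith)
  have hnonneg : 0 ≤ (x + 1) ^ (-p) := Real.rpow_nonneg (by linarith) _
  constructor <;> linarith

theorem exists_pos_one_add_sub_le_sum_rpow_sub_rpow {p h : ℝ} (hp : 0 < p) (hh : h < 1) :
    ∃ δ > 0, ∀ N : ℕ, 2 ≤ N →
      1 + δ - (N : ℝ) ^ (-p) ≤ ∑ i ∈ Icc 2 N, (((i : ℝ) - 1) ^ (-p) - (i : ℝ) ^ (-p)) ^ h := by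
  set a : ℝ := 2 ^ (-p)
  have ha0 : 0 < a := by positivity
  have ha1 : a < 1 := Real.rpow_lt_one_of_one_lt_of_neg one_lt_two (neg_lt_zero.mpr hp)
  refine ⟨(1 - a) ^ h - (1 - a),
    sub_pos.mpr (Real.self_lt_rpow_of_lt_one (by linarith) (by linarith) hh), fun N hN => ?_⟩
  have hd : ∀ i ∈ Icc 2 N, ((i : ℝ) - 1) ^ (-p) - (i : ℝ) ^ (-p) ∈ Set.Icc 0 1 := by
    intro i hi
    have hi2 : (2 : ℝ) ≤ i := by exact_mod_cast (mem_Icc.mp hi).1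
    simpa using rpow_neg_sub_succ_mem_Icc hp.le (x := (i : ℝ) - 1) (by linarith)
  have hfirst : (((2 : ℕ) : ℝ) - 1) ^ (-p) - ((2 : ℕ) : ℝ) ^ (-p) = 1 - a := by norm_num [a]
  have := sum_add_rpow_sub_self_le_sum_rpow (fun i hi => (hd i hi).1) (fun i hi => (hd i hi).2)
    hh.le (mem_Icc.mpr ⟨le_rfl, hN⟩)
  rw [sum_Icc_sub_telescope (fun x => x ^ (-p)) (by omega : 1 ≤ N), hfirst, Nat.cast_one,
    Real.one_rpow] at this
  linarith

theorem stmt2_general (p t h : ℝ) (hp : 0 < p) (hh2 : h < 1) :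
    ∃ N : ℕ, 2 ≤ N ∧
      p ^ h * ∑' i : ℕ, ((N : ℝ) + 1 + (i : ℝ)) ^ (-(t * h)) < 1 ∧
      1 ≤ ∑ i ∈ Finset.Icc 2 N, (((i : ℝ) - 1) ^ (-p) - (i : ℝ) ^ (-p)) ^ h := by
  obtain ⟨δ, hδ, hsum⟩ := exists_pos_one_add_sub_le_sum_rpow_sub_rpow hp hh2
  have htail : ∀ᶠ N : ℕ in atTop, p ^ h * ∑' i : ℕ, ((N : ℝ) + 1 + i) ^ (-(t * h)) < 1 := by
    have := (tendsto_tsum_natCast_add_rpow (-(t * h))).const_mul (p ^ h)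
    rw [mul_zero] at this
    exact this.eventually (eventually_lt_nhds one_pos)
  have hsmall : ∀ᶠ N : ℕ in atTop, (N : ℝ) ^ (-p) ≤ δ :=
    ((tendsto_rpow_neg_atTop hp).comp tendsto_natCast_atTop_atTop).eventually
      (eventually_le_nhds hδ)
  obtain ⟨N, hN2, hNtail, hNsmall⟩ := ((eventually_ge_atTop 2).and (htail.and hsmall)).exists
  exact ⟨N, hN2, hNtail, by linarith [hsum N hN2]⟩

theorem stmt2 (p t h : ℝ) (hp : 0 < p) (ht : p + 1 ≤ t)
    (hh1 : 1 / t < h) (hh2 : h < 1) :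
    ∃ N : ℕ, 2 ≤ N ∧
      p ^ h * ∑' i : ℕ, ((N : ℝ) + 1 + (i : ℝ)) ^ (-(t * h)) < 1 ∧
      1 ≤ ∑ i ∈ Finset.Icc 2 N, (((i : ℝ) - 1) ^ (-p) - (i : ℝ) ^ (-p)) ^ h :=
  stmt2_general p t h hp hh2
end

section
/- Let θ ∈ (0,1), let a : (0,1] → [0,∞) be a nondecreasing continuous function with a(1) := lim_{φ→1⁻} a(φ), and let b ≥ 0. Define f(θ',φ) = ((φ⁻¹ − 1)·a(φ) + ((θ')⁻¹ − φ⁻¹)·b)/((θ')⁻¹ − 1) for 0 < θ' ≤ φ ≤ 1. If 0 < θ' ≤ θ < 1 and θ' ≤ φ' ≤ 1, then f(θ',φ') ≤ max_{φ ∈ [θ,1]} f(θ,φ). -/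
/-!
The quantity `f(θ, φ)` is the point `b + invWeight θ φ * (a φ - b)` of the segment from `b` to
`a φ`, with weight `invWeight θ φ ∈ [0, 1]` for `θ ≤ φ ≤ 1`. If `a φ' ≤ b`, then
`f(θ', φ') ≤ b = f(θ, 1)`. Otherwise shrinking `θ'` only moves `f(θ', φ')` towards `b`, since
`invWeight` is antitone in its first argument: for `φ' ≥ θ` this gives `f(θ', φ') ≤ f(θ, φ')`, and for
`φ' < θ` we get `f(θ', φ') ≤ a φ' ≤ a θ = f(θ, θ)` by monotonicity of `a`.
-/

open Set

noncomputable def invWeight (θ φ : ℝ) : ℝ := (φ⁻¹ - 1) / (θ⁻¹ - 1)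

lemma inv_sub_one_pos {θ : ℝ} (hθ : θ ∈ Ioo 0 1) : 0 < θ⁻¹ - 1 :=
  sub_pos.2 ((one_lt_inv₀ hθ.1).2 hθ.2)

lemma weightedAverage_eq {θ : ℝ} (hθ : θ ≠ 1) (φ x b : ℝ) :
    ((φ⁻¹ - 1) * x + (θ⁻¹ - φ⁻¹) * b) / (θ⁻¹ - 1) = b + invWeight θ φ * (x - b) := by
  have hD : θ⁻¹ - 1 ≠ 0 := sub_ne_zero.2 (inv_ne_one.2 hθ)
  rw [invWeight, show θ⁻¹ - φ⁻¹ = (θ⁻¹ - 1) - (φ⁻¹ - 1) by ring]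
  generalize θ⁻¹ - 1 = D at hD ⊢
  field_simp
  ring

lemma invWeight_nonneg {θ φ : ℝ} (hθ : θ ∈ Ioo 0 1) (hφ : φ ∈ Ioc 0 1) :
    0 ≤ invWeight θ φ :=
  div_nonneg (sub_nonneg.2 ((one_le_inv₀ hφ.1).2 hφ.2)) (inv_sub_one_pos hθ).le

lemma invWeight_le_one {θ φ : ℝ} (hθ : θ ∈ Ioo 0 1) (hθφ : θ ≤ φ) : invWeight θ φ ≤ 1 :=
  div_le_one_of_le₀ (by gcongr; exact hθ.1) (inv_sub_one_pos hθ).le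

lemma invWeight_antitone_left {θ' θ φ : ℝ} (hθ' : 0 < θ') (hθ : θ ∈ Ioo 0 1) (hθ'θ : θ' ≤ θ)
    (hφ : φ ∈ Ioc 0 1) : invWeight θ' φ ≤ invWeight θ φ :=
  div_le_div_of_nonneg_left (sub_nonneg.2 ((one_le_inv₀ hφ.1).2 hφ.2)) (inv_sub_one_pos hθ)
    (by gcongr)

lemma invWeight_one (θ : ℝ) : invWeight θ 1 = 0 := by
  simp [invWeight]

lemma invWeight_self {θ : ℝ} (hθ : θ ≠ 1) : invWeight θ θ = 1 :=
  div_self (sub_ne_zero.2 (inv_ne_one.2 hθ))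

theorem stmt4_general (θ : ℝ) (hθ : θ ∈ Set.Ioo (0 : ℝ) 1) (a : ℝ → ℝ) (b : ℝ)
    (ha_mono : MonotoneOn a (Set.Ioc 0 1))
    (θ' φ' : ℝ) (h1 : 0 < θ') (h2 : θ' ≤ θ) (h3 : θ' ≤ φ') (h4 : φ' ≤ 1) :
    ∃ φ ∈ Set.Icc θ 1,
      ((φ'⁻¹ - 1) * a φ' + (θ'⁻¹ - φ'⁻¹) * b) / (θ'⁻¹ - 1) ≤
        ((φ⁻¹ - 1) * a φ + (θ⁻¹ - φ⁻¹) * b) / (θ⁻¹ - 1) := by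
  have hθ' : θ' ∈ Ioo 0 1 := ⟨h1, h2.trans_lt hθ.2⟩
  have hφ' : φ' ∈ Ioc 0 1 := ⟨h1.trans_le h3, h4⟩
  have hw₀ := invWeight_nonneg hθ' hφ'
  have hw₁ := invWeight_le_one hθ' h3
  simp only [weightedAverage_eq hθ'.2.ne, weightedAverage_eq hθ.2.ne]
  rcases le_or_gt (a φ') b with hab | hba
  · refine ⟨1, ⟨hθ.2.le, le_rfl⟩, ?_⟩
    rw [invWeight_one, zero_mul, add_zero]
    nlinarith
  rcases le_or_gt φ' θ with hφ'θ | hθφ'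
  · refine ⟨θ, ⟨le_rfl, hθ.2.le⟩, ?_⟩
    rw [invWeight_self hθ.2.ne, one_mul, add_sub_cancel]
    calc b + invWeight θ' φ' * (a φ' - b) ≤ a φ' := by nlinarith
      _ ≤ a θ := ha_mono hφ' ⟨hθ.1, hθ.2.le⟩ hφ'θ
  · refine ⟨φ', ⟨hθφ'.le, h4⟩, ?_⟩
    gcongr
    exact invWeight_antitone_left h1 hθ h2 hφ'

theorem stmt4 (θ : ℝ) (hθ : θ ∈ Set.Ioo (0 : ℝ) 1) (a : ℝ → ℝ) (b : ℝ)
    (ha_mono : MonotoneOn a (Set.Ioc 0 1))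
    (ha_cont : ContinuousOn a (Set.Ioc 0 1))
    (ha_nonneg : ∀ φ ∈ Set.Ioc (0 : ℝ) 1, 0 ≤ a φ) (hb : 0 ≤ b)
    (θ' φ' : ℝ) (h1 : 0 < θ') (h2 : θ' ≤ θ) (h3 : θ' ≤ φ') (h4 : φ' ≤ 1) :
    ∃ φ ∈ Set.Icc θ 1,
      ((φ'⁻¹ - 1) * a φ' + (θ'⁻¹ - φ'⁻¹) * b) / (θ'⁻¹ - 1) ≤
        ((φ⁻¹ - 1) * a φ + (θ⁻¹ - φ⁻¹) * b) / (θ⁻¹ - 1) :=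
  stmt4_general θ hθ a b ha_mono θ' φ' h1 h2 h3 h4
end

section
/- Let b, q ≥ 0 with b ≤ q, and let ρ ∈ (0,1). Suppose a : (0,1] → [0,∞) satisfies a(φ) ≤ min{ b + ((1−ρ)φ/((1−φ)ρ))·(q − b), q } for all φ ∈ (0,1) (the three-parameter form with box dimension b, quasi-Assouad dimension q and phase transition ρ), with a(1) = q. Then for every θ ∈ (0, ρ), the function φ ↦ ((φ⁻¹ − 1)·a(φ) + (θ⁻¹ − φ⁻¹)·max{h, b}) / (θ⁻¹ − 1), with b < h < q, attains its maximum over φ ∈ [θ,1] at φ = ρ, and the maximum value equals h + ((1−ρ)θ/((1−θ)ρ))·(q − h). -/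
/-!
In the variable `u = φ⁻¹` the numerator `(u - 1) a(φ) + (θ⁻¹ - u) h` is bounded by two affine
functions of `u`: by `(u - 1) q + (θ⁻¹ - u) h` (from `a ≤ q`), of slope `q - h > 0`, and, since
`(φ⁻¹ - 1) φ / (1 - φ) = 1`, by `(u - ρ⁻¹) b + (ρ⁻¹ - 1) q + (θ⁻¹ - u) h`, of slope `b - h < 0`.
Both meet at `u = ρ⁻¹`, where `a(ρ) = q` attains them, so `φ = ρ` is the maximiser.
-/

open Set

noncomputable def threeParamSpectrum (b q ρ φ : ℝ) : ℝ :=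
  min (b + ((1 - ρ) * φ / ((1 - φ) * ρ)) * (q - b)) q

lemma inv_sub_one_mul_phase_ratio {ρ φ : ℝ} (hρ : ρ ≠ 0) (hφ0 : φ ≠ 0) (hφ1 : φ ≠ 1) :
    (φ⁻¹ - 1) * ((1 - ρ) * φ / ((1 - φ) * ρ)) = ρ⁻¹ - 1 := by
  have : 1 - φ ≠ 0 := sub_ne_zero.2 hφ1.symm
  field_simp

lemma threeParamSpectrum_self (b q : ℝ) {ρ : ℝ} (hρ : ρ ∈ Ioo (0 : ℝ) 1) :
    threeParamSpectrum b q ρ ρ = q := by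
  have hratio : (1 - ρ) * ρ / ((1 - ρ) * ρ) = 1 :=
    div_self (mul_pos (sub_pos.2 hρ.2) hρ.1).ne'
  simp [threeParamSpectrum, hratio]

lemma inv_sub_one_mul_threeParamSpectrum_le {b q ρ φ : ℝ} (hρ : ρ ≠ 0)
    (hφ : φ ∈ Ioo (0 : ℝ) 1) :
    (φ⁻¹ - 1) * threeParamSpectrum b q ρ φ ≤ (φ⁻¹ - ρ⁻¹) * b + (ρ⁻¹ - 1) * q := by
  have hφ' : 0 ≤ φ⁻¹ - 1 := sub_nonneg.2 ((one_le_inv₀ hφ.1).2 hφ.2.le)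
  calc (φ⁻¹ - 1) * threeParamSpectrum b q ρ φ
      ≤ (φ⁻¹ - 1) * (b + ((1 - ρ) * φ / ((1 - φ) * ρ)) * (q - b)) :=
        mul_le_mul_of_nonneg_left (min_le_left _ _) hφ'
    _ = (φ⁻¹ - ρ⁻¹) * b + (ρ⁻¹ - 1) * q := by
        rw [mul_add, ← mul_assoc, inv_sub_one_mul_phase_ratio hρ hφ.1.ne' hφ.2.ne]
        ring

lemma inv_sub_one_mul_le_of_mem_Ioc {b q ρ : ℝ} {a : ℝ → ℝ} (hbq : b ≤ q)
    (hρ : ρ ∈ Ioo (0 : ℝ) 1) (ha : ∀ φ ∈ Ioo (0 : ℝ) 1, a φ = threeParamSpectrum b q ρ φ)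
    {φ : ℝ} (hφ : φ ∈ Ioc (0 : ℝ) 1) :
    (φ⁻¹ - 1) * a φ ≤ (φ⁻¹ - 1) * q ∧
      (φ⁻¹ - 1) * a φ ≤ (φ⁻¹ - ρ⁻¹) * b + (ρ⁻¹ - 1) * q := by
  rcases hφ.2.lt_or_eq with hφ1 | rfl
  · rw [ha φ ⟨hφ.1, hφ1⟩]
    exact ⟨mul_le_mul_of_nonneg_left (min_le_right _ _)
        (sub_nonneg.2 ((one_le_inv₀ hφ.1).2 hφ1.le)),
      inv_sub_one_mul_threeParamSpectrum_le hρ.1.ne' ⟨hφ.1, hφ1⟩⟩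
  · have hρ' : 1 ≤ ρ⁻¹ := (one_le_inv₀ hρ.1).2 hρ.2.le
    simp only [inv_one, sub_self, zero_mul, le_refl, true_and]
    nlinarith

lemma add_mul_le_of_le_of_le {b q h r u x : ℝ} (hbh : b ≤ h) (hhq : h ≤ q)
    (hxq : (u - 1) * x ≤ (u - 1) * q) (hxb : (u - 1) * x ≤ (u - r) * b + (r - 1) * q) :
    (u - 1) * x + (r - u) * h ≤ (r - 1) * q := by
  rcases le_total u r with hur | hru
  · linarith [mul_nonneg (sub_nonneg.2 hur) (sub_nonneg.2 hhq)]
  · linarith [mul_nonneg (sub_nonneg.2 hru) (sub_nonneg.2 hbh)]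

lemma phase_value_eq (q h : ℝ) {ρ θ : ℝ} (hρ : ρ ≠ 0) (hθ : θ ∈ Ioo (0 : ℝ) 1) :
    ((ρ⁻¹ - 1) * q + (θ⁻¹ - ρ⁻¹) * h) / (θ⁻¹ - 1) =
      h + ((1 - ρ) * θ / ((1 - θ) * ρ)) * (q - h) := by
  have h1θ : 1 - θ ≠ 0 := (sub_pos.2 hθ.2).ne'
  have hθ0 : θ ≠ 0 := hθ.1.ne'
  field_simp
  ring

theorem stmt5_general (b q h ρ θ : ℝ)
    (hbh : b < h) (hhq : h < q) (hρ : ρ ∈ Set.Ioo (0 : ℝ) 1)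
    (a : ℝ → ℝ)
    (ha : ∀ φ ∈ Set.Ioo (0 : ℝ) 1,
      a φ = min (b + ((1 - ρ) * φ / ((1 - φ) * ρ)) * (q - b)) q)
    (hθ : θ ∈ Set.Ioo (0 : ℝ) ρ) :
    (∀ φ ∈ Set.Icc θ 1,
      ((φ⁻¹ - 1) * a φ + (θ⁻¹ - φ⁻¹) * max h b) / (θ⁻¹ - 1) ≤
        ((ρ⁻¹ - 1) * a ρ + (θ⁻¹ - ρ⁻¹) * max h b) / (θ⁻¹ - 1)) ∧
    ((ρ⁻¹ - 1) * a ρ + (θ⁻¹ - ρ⁻¹) * max h b) / (θ⁻¹ - 1) =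
      h + ((1 - ρ) * θ / ((1 - θ) * ρ)) * (q - h) := by
  have hθ1 : θ < 1 := hθ.2.trans hρ.2
  have hden : 0 < θ⁻¹ - 1 := sub_pos.2 ((one_lt_inv₀ hθ.1).2 hθ1)
  have haρ : a ρ = q := (ha ρ hρ).trans (threeParamSpectrum_self b q hρ)
  rw [max_eq_left hbh.le, haρ]
  refine ⟨fun φ hφ => ?_, phase_value_eq q h hρ.1.ne' ⟨hθ.1, hθ1⟩⟩
  obtain ⟨hxq, hxb⟩ := inv_sub_one_mul_le_of_mem_Ioc (hbh.trans hhq).le hρ ha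
    ⟨hθ.1.trans_le hφ.1, hφ.2⟩
  rw [div_le_div_iff_of_pos_right hden]
  linarith [add_mul_le_of_le_of_le hbh.le hhq.le hxq hxb]

theorem stmt5 (b q h ρ θ : ℝ) (hb : 0 ≤ b) (hq : 0 ≤ q) (hbq : b ≤ q)
    (hbh : b < h) (hhq : h < q) (hρ : ρ ∈ Set.Ioo (0 : ℝ) 1)
    (a : ℝ → ℝ)
    (ha : ∀ φ ∈ Set.Ioo (0 : ℝ) 1,
      a φ = min (b + ((1 - ρ) * φ / ((1 - φ) * ρ)) * (q - b)) q)
    (ha1 : a 1 = q) (hθ : θ ∈ Set.Ioo (0 : ℝ) ρ) :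
    (∀ φ ∈ Set.Icc θ 1,
      ((φ⁻¹ - 1) * a φ + (θ⁻¹ - φ⁻¹) * max h b) / (θ⁻¹ - 1) ≤
        ((ρ⁻¹ - 1) * a ρ + (θ⁻¹ - ρ⁻¹) * max h b) / (θ⁻¹ - 1)) ∧
    ((ρ⁻¹ - 1) * a ρ + (θ⁻¹ - ρ⁻¹) * max h b) / (θ⁻¹ - 1) =
      h + ((1 - ρ) * θ / ((1 - θ) * ρ)) * (q - h) :=
  stmt5_general b q h ρ θ hbh hhq hρ a ha hθ
end

section
/- Let α ∈ (0,1) and for k ∈ ℕ set I_k = ℕ ∩ [2^k, 2^k + 2^{kα}]. Then for every s > α/2 the series ∑_{k=1}^∞ ∑_{i ∈ I_k} i^{−2s} converges, and for every s < α/2 it diverges. Consequently inf{ s ≥ 0 : ∑_k ∑_{i∈I_k} i^{−2s} < ∞ } = α/2. -/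
/-!
On the block `I_{k+1} = [2^(k+1), 2^(k+1) + 2^((k+1)α)]` every `i^(-t)` is comparable to
`2^(-(k+1)t)` (since `i ≤ 2^(k+2)`), and the block has about `2^((k+1)α)` elements. Hence the
`k`-th block sum is comparable to `(2^(α - t))^(k+1)`, a geometric sequence that is summable
iff `t > α`. With `t = 2s` the critical exponent is `s = α/2`.
-/

open Finset

/-- The sum over the block `I_{k+1}` of the paper (blocks are indexed from `k = 0`), with
exponent `t = 2s`. -/
noncomputable def clusteredSum (α t : ℝ) (k : ℕ) : ℝ :=
  ∑ i ∈ Icc (2 ^ (k + 1)) (2 ^ (k + 1) + ⌊(2 : ℝ) ^ (((k : ℝ) + 1) * α)⌋₊), (i : ℝ) ^ (-t)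

section BlockBounds

variable {N : ℕ} (hN : 0 < N) (m : ℕ) {t : ℝ} (ht : 0 ≤ t)
include hN ht

lemma sum_Icc_rpow_neg_le : ∑ i ∈ Icc N (N + m), (i : ℝ) ^ (-t) ≤ (m + 1) * (N : ℝ) ^ (-t) := by
  have hcard : #(Icc N (N + m)) = m + 1 := by rw [Nat.card_Icc]; omega
  calc ∑ i ∈ Icc N (N + m), (i : ℝ) ^ (-t) ≤ #(Icc N (N + m)) • (N : ℝ) ^ (-t) := by
        refine sum_le_card_nsmul _ _ _ fun i hi => ?_
        exact Real.rpow_le_rpow_of_nonpos (by positivity)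
          (by exact_mod_cast (mem_Icc.1 hi).1) (by linarith)
    _ = (m + 1) * (N : ℝ) ^ (-t) := by rw [hcard, nsmul_eq_mul]; push_cast; ring

lemma le_sum_Icc_rpow_neg :
    (m + 1) * ((N + m : ℕ) : ℝ) ^ (-t) ≤ ∑ i ∈ Icc N (N + m), (i : ℝ) ^ (-t) := by
  have hcard : #(Icc N (N + m)) = m + 1 := by rw [Nat.card_Icc]; omega
  calc (m + 1) * ((N + m : ℕ) : ℝ) ^ (-t) = #(Icc N (N + m)) • ((N + m : ℕ) : ℝ) ^ (-t) := by
        rw [hcard, nsmul_eq_mul]; push_cast; ring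
    _ ≤ ∑ i ∈ Icc N (N + m), (i : ℝ) ^ (-t) := by
        refine card_nsmul_le_sum _ _ _ fun i hi => ?_
        have hi := mem_Icc.1 hi
        exact Real.rpow_le_rpow_of_nonpos (by exact_mod_cast hN.trans_le hi.1)
          (by exact_mod_cast hi.2) (by linarith)

end BlockBounds

lemma two_rpow_succ_mul (k : ℕ) (a : ℝ) :
    (2 : ℝ) ^ (((k : ℝ) + 1) * a) = ((2 : ℝ) ^ a) ^ (k + 1) := by
  rw [← Real.rpow_mul_natCast zero_le_two, mul_comm]; push_cast; rfl

lemma natCast_two_pow_rpow (k : ℕ) (a : ℝ) :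
    (((2 ^ k : ℕ) : ℝ)) ^ a = ((2 : ℝ) ^ a) ^ k := by
  push_cast; exact (Real.rpow_pow_comm zero_le_two a k).symm

lemma clusteredSum_nonneg (α t : ℝ) (k : ℕ) : 0 ≤ clusteredSum α t k :=
  sum_nonneg fun _ _ => by positivity

lemma clusteredSum_antitone (α : ℝ) (k : ℕ) : Antitone fun t => clusteredSum α t k :=
  fun _ _ htt' => sum_le_sum fun i hi => Real.rpow_le_rpow_of_exponent_le
    (by exact_mod_cast Nat.one_le_two_pow.trans (mem_Icc.1 hi).1) (neg_le_neg htt')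

lemma clusteredSum_le {α t : ℝ} (hα : 0 ≤ α) (ht : 0 ≤ t) (k : ℕ) :
    clusteredSum α t k ≤ 2 * ((2 : ℝ) ^ (α - t)) ^ (k + 1) := by
  rw [clusteredSum, two_rpow_succ_mul]
  set x : ℝ := ((2 : ℝ) ^ α) ^ (k + 1)
  have hx : 1 ≤ x := one_le_pow₀ (Real.one_le_rpow one_le_two hα)
  calc _ ≤ (⌊x⌋₊ + 1) * ((2 ^ (k + 1) : ℕ) : ℝ) ^ (-t) :=
        sum_Icc_rpow_neg_le (by positivity) _ ht
    _ ≤ 2 * x * ((2 ^ (k + 1) : ℕ) : ℝ) ^ (-t) := by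
        gcongr; linarith [Nat.floor_le (zero_le_one.trans hx)]
    _ = 2 * ((2 : ℝ) ^ (α - t)) ^ (k + 1) := by
        rw [natCast_two_pow_rpow, mul_assoc, ← mul_pow, ← Real.rpow_add zero_lt_two,
          sub_eq_add_neg]

lemma le_clusteredSum {α t : ℝ} (hα₁ : α ≤ 1) (ht : 0 ≤ t) (k : ℕ) :
    (2 : ℝ) ^ (-t) * ((2 : ℝ) ^ (α - t)) ^ (k + 1) ≤ clusteredSum α t k := by
  rw [clusteredSum, two_rpow_succ_mul]
  set x : ℝ := ((2 : ℝ) ^ α) ^ (k + 1)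
  have hfloor : ⌊x⌋₊ ≤ 2 ^ (k + 1) := Nat.floor_le_of_le <| by
    push_cast
    exact pow_le_pow_left₀ (by positivity)
      (by simpa using Real.rpow_le_rpow_of_exponent_le one_le_two hα₁) _
  have hblock : 2 ^ (k + 1) + ⌊x⌋₊ ≤ 2 ^ (k + 2) := by rw [pow_succ _ (k + 1)]; omega
  calc (2 : ℝ) ^ (-t) * ((2 : ℝ) ^ (α - t)) ^ (k + 1)
        = x * ((2 ^ (k + 2) : ℕ) : ℝ) ^ (-t) := by
        rw [natCast_two_pow_rpow, sub_eq_add_neg, Real.rpow_add zero_lt_two]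
        ring
    _ ≤ (⌊x⌋₊ + 1) * ((2 ^ (k + 1) + ⌊x⌋₊ : ℕ) : ℝ) ^ (-t) :=
        mul_le_mul (Nat.lt_floor_add_one x).le
          (Real.rpow_le_rpow_of_nonpos (by positivity) (by exact_mod_cast hblock) (by linarith))
          (by positivity) (by positivity)
    _ ≤ _ := le_sum_Icc_rpow_neg (by positivity) _ ht

lemma summable_clusteredSum {α t : ℝ} (hα : 0 ≤ α) (hαt : α < t) :
    Summable (clusteredSum α t) := by
  have hgeom : Summable fun k : ℕ => 2 * ((2 : ℝ) ^ (α - t)) ^ (k + 1) :=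
    ((summable_nat_add_iff 1).2 <| summable_geometric_of_lt_one (by positivity) <|
      Real.rpow_lt_one_of_one_lt_of_neg one_lt_two (by linarith)).mul_left 2
  exact hgeom.of_nonneg_of_le (clusteredSum_nonneg α t)
    (clusteredSum_le hα (hα.trans hαt.le))

lemma not_summable_clusteredSum {α t : ℝ} (hα₀ : 0 ≤ α) (hα₁ : α ≤ 1) (htα : t ≤ α) :
    ¬ Summable (clusteredSum α t) := by
  intro hsum
  set t' := max t 0
  have hsum' : Summable (clusteredSum α t') := hsum.of_nonneg_of_le (clusteredSum_nonneg α t')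
    fun k => clusteredSum_antitone α k (le_max_left t 0)
  -- the block sums stay above `2^(-t')`, so they cannot tend to zero
  have hbound : ∀ k, (2 : ℝ) ^ (-t') ≤ clusteredSum α t' k := fun k =>
    calc (2 : ℝ) ^ (-t') ≤ (2 : ℝ) ^ (-t') * ((2 : ℝ) ^ (α - t')) ^ (k + 1) :=
          le_mul_of_one_le_right (by positivity) <| one_le_pow₀ <|
            Real.one_le_rpow one_le_two (sub_nonneg.2 (max_le htα hα₀))
      _ ≤ clusteredSum α t' k := le_clusteredSum hα₁ (le_max_right t 0) k
  have := ge_of_tendsto' hsum'.tendsto_atTop_zero hbound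
  have : (0 : ℝ) < 2 ^ (-t') := by positivity
  linarith

theorem stmt13 (α : ℝ) (hα : α ∈ Set.Ioo (0 : ℝ) 1) :
    (∀ s : ℝ, α / 2 < s →
      Summable (fun k : ℕ =>
        ∑ i ∈ Finset.Icc (2 ^ (k + 1)) (2 ^ (k + 1) + ⌊(2 : ℝ) ^ (((k : ℝ) + 1) * α)⌋₊),
          ((i : ℝ)) ^ (-(2 * s)))) ∧
    (∀ s : ℝ, s < α / 2 →
      ¬ Summable (fun k : ℕ =>
        ∑ i ∈ Finset.Icc (2 ^ (k + 1)) (2 ^ (k + 1) + ⌊(2 : ℝ) ^ (((k : ℝ) + 1) * α)⌋₊),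
          ((i : ℝ)) ^ (-(2 * s)))) ∧
    sInf {s : ℝ | 0 ≤ s ∧
      Summable (fun k : ℕ =>
        ∑ i ∈ Finset.Icc (2 ^ (k + 1)) (2 ^ (k + 1) + ⌊(2 : ℝ) ^ (((k : ℝ) + 1) * α)⌋₊),
          ((i : ℝ)) ^ (-(2 * s)))} = α / 2 := by
  obtain ⟨hα₀, hα₁⟩ := hα
  have hconv : ∀ s : ℝ, α / 2 < s → Summable (clusteredSum α (2 * s)) := fun s hs =>
    summable_clusteredSum hα₀.le (by linarith)
  have hdiv : ∀ s : ℝ, s < α / 2 → ¬ Summable (clusteredSum α (2 * s)) := fun s hs =>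
    not_summable_clusteredSum hα₀.le hα₁.le (by linarith)
  refine ⟨hconv, hdiv, csInf_eq_of_forall_ge_of_forall_gt_exists_lt
    ⟨α, hα₀.le, hconv α (by linarith)⟩ (fun s hs => not_lt.1 fun h => hdiv s h hs.2)
    fun w hw => ?_⟩
  obtain ⟨s, hs, hsw⟩ := exists_between hw
  exact ⟨s, ⟨by linarith, hconv s hs⟩, hsw⟩
end

section
/- Let k ≥ 10 be an integer and suppose (M_n) is a strictly increasing sequence of positive integers with M_{n+1} > M_n^{k/(k−2)}, and suppose I ⊆ ℕ satisfies #(I ∩ [1, M_n^{k/(k−2)}]) ≥ (M_n^{k/(k−2)})^{1−1/k} for all n. Then there is a constant c > 0 (independent of n) with #(I ∩ [M_n, M_n^{k/(k−2)}]) ≥ c·M_n^{(k−1)/(k−2)} for all n, and the series ∑_{b ∈ I} b^{−2·(k−1)/(2k)} = ∑_{b ∈ I} b^{−(k−1)/k} diverges. -/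
/-!
Put `α = k/(k-2)` and `γ = (k-1)/(k-2)`, so that `(M^α)^(1-1/k) = M^γ`. At most `M - 1` of the
elements of `I ∩ [1, M^α]` lie below `M`, so `I ∩ [M, M^α]` has at least `M^γ - M + 1` elements,
and Bernoulli's inequality `γ (M - 1) ≤ M^γ - 1` turns this into `(1 - 1/γ) M^γ`. Each of these
elements `b ≤ M^α` contributes `b^(-(k-1)/k) ≥ M^(-γ)` to the series, so each block `[M_n, M_n^α]`
contributes at least `1 - 1/γ`, and the blocks escape to infinity: the series violates the Cauchy
criterion.
-/

open Filter Finset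

lemma one_sub_inv_mul_rpow_le {γ x : ℝ} (hγ : 1 ≤ γ) (hx : 0 ≤ x) :
    (1 - γ⁻¹) * x ^ γ ≤ x ^ γ - x + 1 := by
  have hbern : 1 + γ * (x - 1) ≤ x ^ γ := by
    simpa using one_add_mul_self_le_rpow_one_add (s := x - 1) (by linarith) hγ
  have hγ0 : 0 < γ := by linarith
  have : x - 1 ≤ γ⁻¹ * x ^ γ := by
    rw [inv_mul_eq_div, le_div_iff₀ hγ0]
    linarith
  linarith

lemma ncard_inter_Icc_one_add_one_le (I : Set ℕ) {m : ℕ} (hm : 1 ≤ m) (N : ℕ) :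
    (I ∩ Set.Icc 1 N).ncard + 1 ≤ (I ∩ Set.Icc m N).ncard + m := by
  have hsub : I ∩ Set.Icc 1 N ⊆ (I ∩ Set.Icc m N) ∪ Set.Ico 1 m := by
    rintro b ⟨hbI, hb1, hbN⟩
    by_cases hmb : m ≤ b
    · exact Or.inl ⟨hbI, hmb, hbN⟩
    · exact Or.inr ⟨hb1, by omega⟩
  have hIco : (Set.Ico 1 m).ncard = m - 1 := by
    rw [← Finset.coe_Ico, Set.ncard_coe_finset, Nat.card_Ico]
  have := (Set.ncard_le_ncard hsub ((Set.finite_Icc m N).inter_of_right I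
    |>.union (Set.finite_Ico 1 m))).trans (Set.ncard_union_le _ _)
  omega

lemma one_sub_inv_mul_rpow_le_ncard_inter_Icc (I : Set ℕ) {m : ℕ} (hm : 1 ≤ m) (N : ℕ)
    {γ : ℝ} (hγ : 1 ≤ γ) (hI : (m : ℝ) ^ γ ≤ (I ∩ Set.Icc 1 N).ncard) :
    (1 - γ⁻¹) * (m : ℝ) ^ γ ≤ (I ∩ Set.Icc m N).ncard := by
  have hcount : ((I ∩ Set.Icc 1 N).ncard : ℝ) + 1 ≤ (I ∩ Set.Icc m N).ncard + m := by
    exact_mod_cast ncard_inter_Icc_one_add_one_le I hm N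
  have := one_sub_inv_mul_rpow_le hγ (Nat.cast_nonneg m)
  linarith

lemma ncard_inter_Icc_mul_le_sum_indicator (I : Set ℕ) (g : ℕ → ℝ) (m N : ℕ) {t : ℝ}
    (ht : ∀ b ∈ I ∩ Set.Icc m N, t ≤ g b) :
    (I ∩ Set.Icc m N).ncard * t ≤ ∑ b ∈ Icc m N, I.indicator g b := by
  classical
  have hfilter : ((Icc m N).filter (· ∈ I) : Set ℕ) = I ∩ Set.Icc m N := by
    ext b
    simp [and_comm]
  rw [Finset.sum_indicator_eq_sum_filter, ← hfilter, Set.ncard_coe_finset, ← nsmul_eq_mul]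
  exact Finset.card_nsmul_le_sum _ _ _ fun b hb => ht b (by rwa [← hfilter])

lemma not_summable_of_le_sum_Icc {f : ℕ → ℝ} {a b : ℕ → ℕ} (ha : Tendsto a atTop atTop)
    {c : ℝ} (hc : 0 < c) (hblock : ∀ n, c ≤ ∑ i ∈ Icc (a n) (b n), f i) : ¬ Summable f := by
  intro hf
  obtain ⟨s, hs⟩ := hf.vanishing (Iio_mem_nhds hc)
  obtain ⟨n, hn⟩ := (ha.eventually_ge_atTop (s.sup id + 1)).exists
  have hdisj : Disjoint (Icc (a n) (b n)) s := by
    refine Finset.disjoint_left.mpr fun i hi his => ?_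
    have := Finset.le_sup (f := id) his
    simp only [Finset.mem_Icc, id] at hi this
    omega
  exact (hblock n).not_gt (hs _ hdisj)

lemma rpow_neg_mul_le_rpow_neg {m b α e : ℝ} (hm : 0 ≤ m) (hb : 0 < b) (hbm : b ≤ m ^ α)
    (he : 0 ≤ e) : m ^ (-(α * e)) ≤ b ^ (-e) := by
  rw [← mul_neg, Real.rpow_mul hm]
  exact Real.rpow_le_rpow_of_nonpos hb hbm (neg_nonpos.mpr he)

lemma le_sum_indicator_rpow_neg (I : Set ℕ) {m : ℕ} (hm : 1 ≤ m) {α e c : ℝ} (he : 0 ≤ e)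
    (hc : c * (m : ℝ) ^ (α * e) ≤ (I ∩ Set.Icc m ⌊(m : ℝ) ^ α⌋₊).ncard) :
    c ≤ ∑ b ∈ Icc m ⌊(m : ℝ) ^ α⌋₊, I.indicator (fun b : ℕ => (b : ℝ) ^ (-e)) b := by
  have hm0 : (0 : ℝ) < m := by exact_mod_cast hm
  have hinv : (m : ℝ) ^ (α * e) * (m : ℝ) ^ (-(α * e)) = 1 := by
    rw [← Real.rpow_add hm0, add_neg_cancel, Real.rpow_zero]
  calc c = c * (m : ℝ) ^ (α * e) * (m : ℝ) ^ (-(α * e)) := by rw [mul_assoc, hinv, mul_one]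
    _ ≤ (I ∩ Set.Icc m ⌊(m : ℝ) ^ α⌋₊).ncard * (m : ℝ) ^ (-(α * e)) := by gcongr
    _ ≤ _ := by
      refine ncard_inter_Icc_mul_le_sum_indicator I _ _ _ fun b ⟨_, hmb, hbN⟩ => ?_
      refine rpow_neg_mul_le_rpow_neg hm0.le ?_ ((Nat.le_floor_iff (by positivity)).mp hbN) he
      exact_mod_cast hm.trans hmb

theorem stmt14 (k : ℕ) (hk : 10 ≤ k) (M : ℕ → ℕ) (hMpos : ∀ n, 0 < M n)
    (hMinc : ∀ n, ((M n : ℝ)) ^ ((k : ℝ) / ((k : ℝ) - 2)) < (M (n + 1) : ℝ))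
    (I : Set ℕ)
    (hI : ∀ n, (((M n : ℝ)) ^ ((k : ℝ) / ((k : ℝ) - 2))) ^ (1 - 1 / (k : ℝ)) ≤
      ((I ∩ Set.Icc 1 ⌊((M n : ℝ)) ^ ((k : ℝ) / ((k : ℝ) - 2))⌋₊).ncard : ℝ)) :
    (∃ c > 0, ∀ n, c * ((M n : ℝ)) ^ (((k : ℝ) - 1) / ((k : ℝ) - 2)) ≤
      ((I ∩ Set.Icc (M n) ⌊((M n : ℝ)) ^ ((k : ℝ) / ((k : ℝ) - 2))⌋₊).ncard : ℝ)) ∧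
    ¬ Summable (fun b : I => ((b : ℕ) : ℝ) ^ (-(((k : ℝ) - 1) / (k : ℝ)))) := by
  have hk2 : (2 : ℝ) < k := by exact_mod_cast (by omega : 2 < k)
  have hαe : (k : ℝ) / ((k : ℝ) - 2) * (((k : ℝ) - 1) / k) = ((k : ℝ) - 1) / ((k : ℝ) - 2) := by
    field_simp
  have hαγ : (k : ℝ) / ((k : ℝ) - 2) * (1 - 1 / k) = ((k : ℝ) - 1) / ((k : ℝ) - 2) := by
    rwa [one_sub_div (by positivity)]
  set α : ℝ := (k : ℝ) / ((k : ℝ) - 2)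
  set γ : ℝ := ((k : ℝ) - 1) / ((k : ℝ) - 2)
  have hα : 1 ≤ α := by rw [le_div_iff₀ (by linarith)]; linarith
  have hγ : 1 < γ := by rw [lt_div_iff₀ (by linarith)]; linarith
  have hcount : ∀ n, (1 - γ⁻¹) * (M n : ℝ) ^ γ ≤ (I ∩ Set.Icc (M n) ⌊(M n : ℝ) ^ α⌋₊).ncard := by
    intro n
    refine one_sub_inv_mul_rpow_le_ncard_inter_Icc I (hMpos n) _ hγ.le ?_
    have := hI n
    rwa [← Real.rpow_mul (by positivity), hαγ] at this
  have hc : 0 < 1 - γ⁻¹ := sub_pos.mpr (inv_lt_one_of_one_lt₀ hγ)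
  refine ⟨⟨1 - γ⁻¹, hc, hcount⟩, fun hsum => ?_⟩
  have hMmono : StrictMono M := strictMono_nat_of_lt_succ fun n => by
    have := (Real.self_le_rpow_of_one_le (by exact_mod_cast hMpos n) hα).trans_lt (hMinc n)
    exact_mod_cast this
  have hsum' : Summable (I.indicator fun b : ℕ => (b : ℝ) ^ (-(((k : ℝ) - 1) / k))) :=
    summable_subtype_iff_indicator.mp hsum
  have he : 0 ≤ ((k : ℝ) - 1) / k := div_nonneg (by linarith) (by linarith)
  exact not_summable_of_le_sum_Icc hMmono.tendsto_atTop hc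
    (fun n => le_sum_indicator_rpow_neg I (hMpos n) (α := α) he (by rw [hαe]; exact hcount n))
    hsum'
end
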